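/- For t ∈ ℝ define v_t : {(x,y) : x > 0} × ℝ → ℝ³ by v_t(x,y) = ( −(coth(√3 x) + (2/√3)cos t)·e^{2(−x cos t + y sin t)}, −(coth(√3 x) − (cos t − √3 sin t)/√3)·e^{(cos t − √3 sin t)x + (−sin t − √3 cos t)y}, −(coth(√3 x) − (cos t + √3 sin t)/√3)·e^{(cos t + √3 sin t)x + (−sin t + √3 cos t)y} ). Then for every t ∈ ℝ, each component of v_t satisfies ∂²v/∂x² + ∂²v/∂y² = (6/sinh²(√3 x) + 4)·v for all x > 0, y ∈ ℝ. -/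

import Mathlib

/-- Real hyperbolic cotangent. -/
noncomputable def coth (x : ℝ) : ℝ := Real.cosh x / Real.sinh x

/-- The associated family (at loop parameter `λ = e^{3it}`) of Hildebrand's case-1
complete hyperbolic affine sphere, up to a constant invertible matrix factor. -/
noncomputable def vt (t x y : ℝ) : Fin 3 → ℝ :=
  ![ -(coth (Real.sqrt 3 * x) + (2 / Real.sqrt 3) * Real.cos t) *
       Real.exp (2 * (-x * Real.cos t + y * Real.sin t)),
     -(coth (Real.sqrt 3 * x) - (Real.cos t - Real.sqrt 3 * Real.sin t) / Real.sqrt 3) *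
       Real.exp ((Real.cos t - Real.sqrt 3 * Real.sin t) * x +
         (-Real.sin t - Real.sqrt 3 * Real.cos t) * y),
     -(coth (Real.sqrt 3 * x) - (Real.cos t + Real.sqrt 3 * Real.sin t) / Real.sqrt 3) *
       Real.exp ((Real.cos t + Real.sqrt 3 * Real.sin t) * x +
         (-Real.sin t + Real.sqrt 3 * Real.cos t) * y) ]

/-!
Every component of `vt t` has the form `(a / c - coth (c x)) e^{a x + b y}` with `c = √3` and
`a² + b² = 4`. Since `h = coth (c x)` solves the Riccati equation `h' = c (1 - h²)`, the factor
`F = a / c - h` satisfies `F'' + 2 a F' = 2 c² (h² - 1) F = 2 c² csch² (c x) F`, and with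
`E = e^{a x + b y}` this gives
`Δ (F E) = (F'' + 2 a F' + (a² + b²) F) E = (2 c² csch² (c x) + a² + b²) F E`.
-/

open Real Filter Topology

theorem hasDerivAt_coth {x : ℝ} (hx : x ≠ 0) : HasDerivAt coth (1 - coth x ^ 2) x := by
  have hs : sinh x ≠ 0 := sinh_ne_zero.2 hx
  refine ((hasDerivAt_cosh x).div (hasDerivAt_sinh x) hs).congr_deriv ?_
  simp only [coth, div_pow]
  field_simp

theorem coth_sq_sub_one {x : ℝ} (hx : x ≠ 0) : coth x ^ 2 - 1 = 1 / sinh x ^ 2 := by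
  have hs : sinh x ≠ 0 := sinh_ne_zero.2 hx
  simp only [coth, div_pow, cosh_sq]
  field_simp
  ring

theorem hasDerivAt_coth_const_mul {c x : ℝ} (hcx : c * x ≠ 0) :
    HasDerivAt (fun s => coth (c * s)) (c * (1 - coth (c * x) ^ 2)) x :=
  ((hasDerivAt_coth hcx).comp x ((hasDerivAt_id x).const_mul c)).congr_deriv (by ring)

theorem deriv_deriv_mul_exp {F F' : ℝ → ℝ} {F'' a k x : ℝ}
    (hF : ∀ᶠ s in 𝓝 x, HasDerivAt F (F' s) s) (hF' : HasDerivAt F' F'' x) :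
    deriv (deriv fun s => F s * exp (a * s + k)) x
      = (F'' + 2 * a * F' x + a ^ 2 * F x) * exp (a * x + k) := by
  have hE (s : ℝ) : HasDerivAt (fun s => exp (a * s + k)) (exp (a * s + k) * a) s := by
    simpa using (((hasDerivAt_id s).const_mul a).add_const k).exp
  have hD : deriv (fun s => F s * exp (a * s + k)) =ᶠ[𝓝 x]
      fun s => (F' s + a * F s) * exp (a * s + k) :=
    hF.mono fun s hs => (hs.mul (hE s)).deriv.trans (by ring)
  rw [hD.deriv_eq]
  exact ((hF'.add (hF.self_of_nhds.const_mul a)).mul (hE x)).deriv.trans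
    (by simp only [Pi.add_apply]; ring)

noncomputable def cothMode (c a b x y : ℝ) : ℝ :=
  (a / c - coth (c * x)) * exp (a * x + b * y)

theorem laplacian_cothMode (a b : ℝ) {c x : ℝ} (hcx : c * x ≠ 0) (y : ℝ) :
    deriv (deriv fun s => cothMode c a b s y) x + deriv (deriv fun s => cothMode c a b x s) y
      = (2 * c ^ 2 / sinh (c * x) ^ 2 + (a ^ 2 + b ^ 2)) * cothMode c a b x y := by
  have hF : ∀ᶠ s in 𝓝 x, HasDerivAt (fun s => a / c - coth (c * s))
      (-(c * (1 - coth (c * s) ^ 2))) s := by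
    filter_upwards [((continuous_const_mul c).continuousAt (x := x)).eventually_ne hcx]
      with s hs
    exact (hasDerivAt_coth_const_mul hs).const_sub _
  have hF' : HasDerivAt (fun s => -(c * (1 - coth (c * s) ^ 2)))
      (2 * c ^ 2 * coth (c * x) * (1 - coth (c * x) ^ 2)) x :=
    ((((hasDerivAt_coth_const_mul hcx).pow 2).const_sub 1).const_mul c).neg.congr_deriv
      (by ring)
  have hxx : deriv (deriv fun s => cothMode c a b s y) x
      = (2 * c ^ 2 * coth (c * x) * (1 - coth (c * x) ^ 2)
          + 2 * a * -(c * (1 - coth (c * x) ^ 2)) + a ^ 2 * (a / c - coth (c * x)))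
        * exp (a * x + b * y) :=
    deriv_deriv_mul_exp hF hF'
  have hyy : deriv (deriv fun s => cothMode c a b x s) y
      = b ^ 2 * (a / c - coth (c * x)) * exp (a * x + b * y) := by
    have hmode : (fun s => cothMode c a b x s)
        = fun s => (a / c - coth (c * x)) * exp (b * s + a * x) := by
      funext s
      rw [cothMode, add_comm (a * x)]
    rw [hmode]
    refine (deriv_deriv_mul_exp (F' := fun _ => 0)
      (.of_forall fun s => hasDerivAt_const s _) (hasDerivAt_const y 0)).trans ?_
    rw [add_comm (b * y)]
    ring
  have hac : c * (a / c) = a := mul_div_cancel₀ a (left_ne_zero_of_mul hcx)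
  rw [hxx, hyy, cothMode]
  linear_combination
    (2 * c ^ 2 * (a / c - coth (c * x)) * exp (a * x + b * y)) * coth_sq_sub_one hcx
      + (2 * c * (1 - coth (c * x) ^ 2) * exp (a * x + b * y)) * hac

-- `2 (cos θ, sin θ)` for `θ = π - t`, `π - t - 4π/3`, `π - t - 2π/3`
noncomputable def vtWaveX (t : ℝ) : Fin 3 → ℝ :=
  ![-2 * cos t, cos t - √3 * sin t, cos t + √3 * sin t]

noncomputable def vtWaveY (t : ℝ) : Fin 3 → ℝ :=
  ![2 * sin t, -sin t - √3 * cos t, -sin t + √3 * cos t]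

theorem vt_eq_cothMode (t x y : ℝ) (i : Fin 3) :
    vt t x y i = cothMode √3 (vtWaveX t i) (vtWaveY t i) x y := by
  fin_cases i <;>
    simp only [vt, cothMode, vtWaveX, vtWaveY, Fin.zero_eta, Fin.mk_one, Fin.reduceFinMk,
      Matrix.cons_val_zero, Matrix.cons_val_one, Matrix.cons_val] <;>
    ring_nf

theorem vtWaveX_sq_add_vtWaveY_sq (t : ℝ) (i : Fin 3) :
    vtWaveX t i ^ 2 + vtWaveY t i ^ 2 = 4 := by
  have h3 : √3 ^ 2 = 3 := sq_sqrt (by norm_num)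
  fin_cases i <;>
    simp only [vtWaveX, vtWaveY, Fin.zero_eta, Fin.mk_one, Fin.reduceFinMk,
      Matrix.cons_val_zero, Matrix.cons_val_one, Matrix.cons_val]
  · linear_combination 4 * sin_sq_add_cos_sq t
  all_goals linear_combination (1 + √3 ^ 2) * sin_sq_add_cos_sq t + h3

/-- Every member of the associated family satisfies the affine-sphere equation
`Δ v = (6/sinh²(√3 x) + 4) v` componentwise. -/
theorem associated_family_laplace_case1 :
    ∀ t : ℝ, ∀ x : ℝ, 0 < x → ∀ y : ℝ, ∀ i : Fin 3,
      deriv (deriv fun s => vt t s y i) x + deriv (deriv fun s => vt t x s i) y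
        = (6 / (Real.sinh (Real.sqrt 3 * x)) ^ 2 + 4) * vt t x y i := by
  intro t x hx y i
  simp only [vt_eq_cothMode]
  rw [laplacian_cothMode _ _ (by positivity) y, vtWaveX_sq_add_vtWaveY_sq,
    sq_sqrt (by norm_num)]
  ring
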